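/- For every k ≥ 2 and every ε > 0, there exists m such that if α_1,…,α_m are chosen independently and uniformly from the set of pairs {(a,b) : 1 ≤ a < b ≤ k}, and given the schedule, independent fair coins D_1,…,D_m define τ_i as the transposition α_i when D_i is heads and the identity otherwise, then with probability greater than 1 − ε over the schedule, the conditional total variation distance between the law of τ_m∘⋯∘τ_1 and the uniform distribution on S_k is less than ε. -/

import Mathlib

/-- The random-walk product `τ = τ_m ∘ ⋯ ∘ τ_1`, where `τ_i` is the
transposition `α i` if the coin `D i` is heads and the identity otherwise. -/
def walkProd {k m : ℕ} (α : Fin m → Fin k × Fin k) (D : Fin m → Bool) :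
    Equiv.Perm (Fin k) :=
  (((List.finRange m).reverse.map
    (fun i => if D i then Equiv.swap (α i).1 (α i).2 else 1)).prod)

/-- The conditional total variation distance to uniform on `S_k` of the
product of `m` coin-flipped transpositions with prescribed pairs `α`. -/
noncomputable def schedTV {k m : ℕ}
    (α : Fin m → {p : Fin k × Fin k // p.1 < p.2}) : ℝ :=
  (1 / 2 : ℝ) * ∑ σ : Equiv.Perm (Fin k),
    |(((Finset.univ : Finset (Fin m → Bool)).filter
        (fun D => walkProd (fun i => (α i).val) D = σ)).card : ℝ) / 2 ^ m
      - 1 / (Nat.factorial k)|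

/-!
The argument works for any finite group `G` and any family `s : ι → G` generating it. For a
schedule `a`, let `q_a = P_a - 1/|G|` be the deviation from uniform of the law of the lazy
product. Conditioning on the first step, `q` of a schedule of length `m + 1` is
`(q_a + q_a(· * x⁻¹)) / 2` for a schedule `a` of length `m` and a first generator `x`, so the sum
of `‖q‖₂²` over all schedules of length `m + 1` is the sum over schedules of length `m` of the
energy `∑ᵢ ‖(q_a + q_a(· * (s i)⁻¹)) / 2‖₂²`. The energy of `q` is at most `|ι| ‖q‖₂²`, with
equality only when `q` is invariant under every generator, i.e. constant, i.e. zero when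
`∑ q = 0`. Compactness of the unit sphere of the sum-zero functions makes the loss uniform: the
energy is at most `μ |ι| ‖q‖₂²` for some `μ < 1`. So the mean of `‖q_a‖₂²` over schedules of
length `m` is at most `μ ^ m`. Markov's inequality bounds the proportion of schedules with a large
`‖q_a‖₂`, and Cauchy–Schwarz gives `TV ≤ ½ √|G| ‖q_a‖₂` for the others.
-/

open Finset

theorem exists_lt_one_forall_le_mul_of_homogeneous {E : Type*} [NormedAddCommGroup E]
    [NormedSpace ℝ E] [FiniteDimensional ℝ E] (V : Submodule ℝ E) {f Q : E → ℝ}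
    (hf : Continuous f) (hQ : Continuous Q)
    (hf_smul : ∀ (c : ℝ) x, f (c • x) = c ^ 2 * f x)
    (hQ_smul : ∀ (c : ℝ) x, Q (c • x) = c ^ 2 * Q x)
    (hQ_pos : ∀ x ∈ V, x ≠ 0 → 0 < Q x) (hlt : ∀ x ∈ V, x ≠ 0 → f x < Q x) :
    ∃ μ, 0 ≤ μ ∧ μ < 1 ∧ ∀ x ∈ V, f x ≤ μ * Q x := by
  set S := (V : Set E) ∩ Metric.sphere 0 1
  have hS_ne : ∀ u ∈ S, u ≠ 0 := fun u hu h0 => by simpa [h0] using hu.2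
  obtain ⟨μ, hμ0, hμ1, hμS⟩ : ∃ μ, 0 ≤ μ ∧ μ < 1 ∧ ∀ u ∈ S, f u ≤ μ * Q u := by
    rcases S.eq_empty_or_nonempty with hS | hS
    · exact ⟨0, le_rfl, one_pos, by simp [hS]⟩
    have hSc : IsCompact S := (isCompact_sphere 0 1).inter_left V.closed_of_finiteDimensional
    obtain ⟨u₀, hu₀, hmax⟩ := hSc.exists_isMaxOn hS
      (hf.continuousOn.div hQ.continuousOn fun u hu => (hQ_pos u hu.1 (hS_ne u hu)).ne')
    have hQu₀ := hQ_pos u₀ hu₀.1 (hS_ne u₀ hu₀)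
    refine ⟨max (f u₀ / Q u₀) 0, le_max_right _ _,
      max_lt ((div_lt_one hQu₀).2 (hlt u₀ hu₀.1 (hS_ne u₀ hu₀))) one_pos, fun u hu => ?_⟩
    rw [← div_le_iff₀ (hQ_pos u hu.1 (hS_ne u hu))]
    exact (hmax hu).trans (le_max_left _ _)
  refine ⟨μ, hμ0, hμ1, fun x hx => ?_⟩
  rcases eq_or_ne x 0 with rfl | hx0
  · have hf0 : f 0 = 0 := by simpa using hf_smul 0 0
    have hQ0 : Q 0 = 0 := by simpa using hQ_smul 0 0
    simp [hf0, hQ0]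
  have hu : ‖x‖⁻¹ • x ∈ S := ⟨V.smul_mem _ hx, by simp [norm_smul, hx0]⟩
  have hx_eq : x = ‖x‖ • ‖x‖⁻¹ • x := by
    rw [smul_smul, mul_inv_cancel₀ (norm_ne_zero_iff.2 hx0), one_smul]
  rw [hx_eq, hf_smul, hQ_smul]
  nlinarith [hμS _ hu, sq_nonneg ‖x‖]

theorem apply_mul_eq_of_closure_eq_top {G ι β : Type*} [Group G] {s : ι → G}
    (hs : Subgroup.closure (Set.range s) = ⊤) {q : G → β} (hq : ∀ i g, q (g * s i) = q g)
    (g h : G) : q (g * h) = q g := by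
  have hh : h ∈ Subgroup.closure (Set.range s) := hs ▸ Subgroup.mem_top h
  induction hh using Subgroup.closure_induction generalizing g with
  | mem x hx => obtain ⟨i, rfl⟩ := hx; exact hq i g
  | one => rw [mul_one]
  | mul x y _ _ hx hy => rw [← mul_assoc, hy, hx]
  | inv x _ hx => rw [← hx (g * x⁻¹), inv_mul_cancel_right]

theorem sum_sq_sub_inv_card_le_one {G : Type*} [Fintype G] [Nonempty G] {p : G → ℝ}
    (hp0 : ∀ g, 0 ≤ p g) (hp1 : ∑ g, p g = 1) :
    ∑ g, (p g - (Fintype.card G : ℝ)⁻¹) ^ 2 ≤ 1 := by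
  have hn : (Fintype.card G : ℝ) * (Fintype.card G : ℝ)⁻¹ = 1 :=
    mul_inv_cancel₀ (by exact_mod_cast Fintype.card_ne_zero)
  have hp_le : ∀ g, p g ≤ 1 := fun g => hp1 ▸ single_le_sum (fun g _ => hp0 g) (mem_univ g)
  have hsq : ∑ g, p g ^ 2 ≤ 1 :=
    hp1 ▸ sum_le_sum fun g _ => by nlinarith [hp0 g, hp_le g]
  have hexpand : ∑ g, (p g - (Fintype.card G : ℝ)⁻¹) ^ 2 =
      ∑ g, p g ^ 2 - (Fintype.card G : ℝ)⁻¹ := by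
    simp only [sub_sq, sum_add_distrib, sum_sub_distrib, ← sum_mul, ← mul_sum, hp1, sum_const,
      card_univ, nsmul_eq_mul]
    linear_combination (Fintype.card G : ℝ)⁻¹ * hn
  have : (0 : ℝ) ≤ (Fintype.card G : ℝ)⁻¹ := by positivity
  linarith

noncomputable def tvDistToUniform {G : Type*} [Fintype G] (p : G → ℝ) : ℝ :=
  1 / 2 * ∑ g, |p g - (Fintype.card G : ℝ)⁻¹|

theorem tvDistToUniform_lt_of_sum_sq_lt {G : Type*} [Fintype G] [Nonempty G] {p : G → ℝ}
    {ε : ℝ} (hε : 0 < ε)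
    (h : ∑ g, (p g - (Fintype.card G : ℝ)⁻¹) ^ 2 < 4 * ε ^ 2 / Fintype.card G) :
    tvDistToUniform p < ε := by
  have hn : (0 : ℝ) < Fintype.card G := by exact_mod_cast Fintype.card_pos
  have hL1 : (∑ g, |p g - (Fintype.card G : ℝ)⁻¹|) ^ 2 < (2 * ε) ^ 2 :=
    calc _ ≤ Fintype.card G * ∑ g, (p g - (Fintype.card G : ℝ)⁻¹) ^ 2 := by
          simpa only [sq_abs, card_univ] using sq_sum_le_card_mul_sum_sq (s := univ)
            (f := fun g => |p g - (Fintype.card G : ℝ)⁻¹|)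
      _ < Fintype.card G * (4 * ε ^ 2 / Fintype.card G) := mul_lt_mul_of_pos_left h hn
      _ = (2 * ε) ^ 2 := by field_simp; ring
  have := abs_lt_of_sq_lt_sq hL1 (by positivity)
  rw [abs_of_nonneg (sum_nonneg fun g _ => abs_nonneg _)] at this
  unfold tvDistToUniform
  linarith

section LazyWalk

variable {G : Type*}

def lazyProd [Monoid G] {m : ℕ} (a : Fin m → G) (D : Fin m → Bool) : G :=
  ((List.finRange m).reverse.map (fun i => if D i then a i else 1)).prod

theorem lazyProd_cons [Monoid G] {m : ℕ} (x : G) (a : Fin m → G) (b : Bool)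
    (D : Fin m → Bool) :
    lazyProd (Fin.cons x a) (Fin.cons b D) = lazyProd a D * if b then x else 1 := by
  simp [lazyProd, List.finRange_succ, List.map_reverse, Function.comp_def]

variable [DecidableEq G]

noncomputable def lazyLaw [Monoid G] {m : ℕ} (a : Fin m → G) (g : G) : ℝ :=
  (#{D | lazyProd a D = g} : ℝ) / 2 ^ m

theorem lazyLaw_nonneg [Monoid G] {m : ℕ} (a : Fin m → G) (g : G) : 0 ≤ lazyLaw a g := by
  unfold lazyLaw; positivity

theorem sum_lazyLaw [Monoid G] [Fintype G] {m : ℕ} (a : Fin m → G) : ∑ g, lazyLaw a g = 1 := by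
  have h := card_eq_sum_card_fiberwise (f := lazyProd a) (s := univ) (t := univ)
    (fun _ _ => mem_coe.2 (mem_univ _))
  simp only [lazyLaw, ← sum_div, ← Nat.cast_sum, ← h, card_univ, Fintype.card_fun,
    Fintype.card_bool, Fintype.card_fin, Nat.cast_pow, Nat.cast_ofNat]
  exact div_self (by positivity)

theorem card_filter_lazyProd_cons [Group G] {m : ℕ} (x : G) (a : Fin m → G) (g : G) :
    #{D | lazyProd (Fin.cons x a) D = g} =
      #{D | lazyProd a D = g} + #{D | lazyProd a D = g * x⁻¹} := by
  simp only [card_filter]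
  rw [← (Fin.consEquiv fun _ => Bool).sum_comp, Fintype.sum_prod_type, Fintype.sum_bool]
  simp [Fin.consEquiv, lazyProd_cons, eq_mul_inv_iff_mul_eq, add_comm]

theorem lazyLaw_cons [Group G] {m : ℕ} (x : G) (a : Fin m → G) (g : G) :
    lazyLaw (Fin.cons x a) g = (lazyLaw a g + lazyLaw a (g * x⁻¹)) / 2 := by
  simp only [lazyLaw, card_filter_lazyProd_cons, Nat.cast_add, pow_succ]
  ring

end LazyWalk

section Energy

variable {G ι : Type*} [Group G] [Fintype G] [Fintype ι]

noncomputable def lazyEnergy (s : ι → G) (q : G → ℝ) : ℝ :=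
  ∑ i, ∑ g, ((q g + q (g * (s i)⁻¹)) / 2) ^ 2

theorem lazyEnergy_add_sum_sq_sub (s : ι → G) (q : G → ℝ) :
    lazyEnergy s q + ∑ i, ∑ g, ((q g - q (g * (s i)⁻¹)) / 2) ^ 2 =
      Fintype.card ι * ∑ g, q g ^ 2 := by
  have hshift : ∀ i, ∑ g, q (g * (s i)⁻¹) ^ 2 = ∑ g, q g ^ 2 := fun i =>
    Equiv.sum_comp (Equiv.mulRight (s i)⁻¹) (fun g => q g ^ 2)
  have hterm : ∀ i, ∑ g, (((q g + q (g * (s i)⁻¹)) / 2) ^ 2 + ((q g - q (g * (s i)⁻¹)) / 2) ^ 2)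
      = ∑ g, q g ^ 2 := fun i => by
    rw [← add_halves (∑ g, q g ^ 2)]
    nth_rw 2 [← hshift i]
    rw [sum_div, sum_div, ← sum_add_distrib]
    exact sum_congr rfl fun g _ => by ring
  simp only [lazyEnergy, ← sum_add_distrib, hterm, sum_const, card_univ, nsmul_eq_mul]

theorem lazyEnergy_lt {s : ι → G} (hs : Subgroup.closure (Set.range s) = ⊤) {q : G → ℝ}
    (hq_sum : ∑ g, q g = 0) (hq : q ≠ 0) :
    lazyEnergy s q < Fintype.card ι * ∑ g, q g ^ 2 := by
  rw [← lazyEnergy_add_sum_sq_sub, lt_add_iff_pos_right]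
  by_contra! hle
  have hzero := (sum_eq_zero_iff_of_nonneg fun i _ => sum_nonneg fun g _ => sq_nonneg _).1
    (le_antisymm hle (sum_nonneg fun i _ => sum_nonneg fun g _ => sq_nonneg _))
  have hinv : ∀ i g, q (g * s i) = q g := fun i g => by
    have := (sum_eq_zero_iff_of_nonneg fun g _ => sq_nonneg _).1 (hzero i (mem_univ i))
      (g * s i) (mem_univ _)
    rw [mul_inv_cancel_right] at this
    linarith [pow_eq_zero_iff two_ne_zero |>.1 this]
  have hconst : ∀ g, q g = q 1 := fun g => by
    simpa using apply_mul_eq_of_closure_eq_top hs hinv 1 g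
  have hq1 : q 1 = 0 := by
    simpa [hconst, Fintype.card_ne_zero] using hq_sum
  exact hq (funext fun g => (hconst g).trans hq1)

theorem exists_lazyEnergy_le [Nonempty ι] {s : ι → G} (hs : Subgroup.closure (Set.range s) = ⊤) :
    ∃ μ, 0 ≤ μ ∧ μ < 1 ∧ ∀ q : G → ℝ, ∑ g, q g = 0 →
      lazyEnergy s q ≤ μ * (Fintype.card ι * ∑ g, q g ^ 2) := by
  let V := LinearMap.ker (∑ g, LinearMap.proj g : (G → ℝ) →ₗ[ℝ] ℝ)
  have hV : ∀ q, q ∈ V ↔ ∑ g, q g = 0 := fun q => by simp [V]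
  have hsq_pos : ∀ q : G → ℝ, q ≠ 0 → 0 < ∑ g, q g ^ 2 := fun q hq => by
    obtain ⟨g, hg⟩ := Function.ne_iff.1 hq
    exact sum_pos' (fun g _ => sq_nonneg _) ⟨g, mem_univ g, sq_pos_of_ne_zero hg⟩
  obtain ⟨μ, hμ0, hμ1, hμ⟩ := exists_lt_one_forall_le_mul_of_homogeneous V
    (f := lazyEnergy s) (Q := fun q => Fintype.card ι * ∑ g, q g ^ 2)
    (by unfold lazyEnergy; fun_prop) (by fun_prop)
    (fun c q => by
      simp only [lazyEnergy, mul_sum]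
      exact sum_congr rfl fun _ _ => sum_congr rfl fun _ _ => by simp; ring)
    (fun c q => by simp only [mul_sum]; exact sum_congr rfl fun _ _ => by simp; ring)
    (fun q _ hq => mul_pos (by exact_mod_cast Fintype.card_pos) (hsq_pos q hq))
    (fun q hqV hq => lazyEnergy_lt hs ((hV q).1 hqV) hq)
  exact ⟨μ, hμ0, hμ1, fun q hq => hμ q ((hV q).2 hq)⟩

end Energy

section Mixing

variable {G ι : Type*} [Group G] [Fintype G] [DecidableEq G] [Fintype ι]

noncomputable def lazyDev {m : ℕ} (a : Fin m → G) (g : G) : ℝ :=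
  lazyLaw a g - (Fintype.card G : ℝ)⁻¹

theorem lazyDev_cons {m : ℕ} (x : G) (a : Fin m → G) (g : G) :
    lazyDev (Fin.cons x a) g = (lazyDev a g + lazyDev a (g * x⁻¹)) / 2 := by
  simp only [lazyDev, lazyLaw_cons]
  ring

theorem sum_lazyDev {m : ℕ} (a : Fin m → G) : ∑ g, lazyDev a g = 0 := by
  simp [lazyDev, sum_lazyLaw]

noncomputable def sumSqLazyDev (s : ι → G) (m : ℕ) : ℝ :=
  ∑ a : Fin m → ι, ∑ g, lazyDev (s ∘ a) g ^ 2

theorem sumSqLazyDev_succ (s : ι → G) (m : ℕ) :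
    sumSqLazyDev s (m + 1) = ∑ a : Fin m → ι, lazyEnergy s (lazyDev (s ∘ a)) := by
  rw [sumSqLazyDev, ← (Fin.consEquiv fun _ => ι).sum_comp, Fintype.sum_prod_type, sum_comm]
  simp [Fin.consEquiv, Fin.comp_cons, lazyDev_cons, lazyEnergy]

theorem sumSqLazyDev_le {s : ι → G} {μ : ℝ} (hμ0 : 0 ≤ μ) (hμ : ∀ q : G → ℝ, ∑ g, q g = 0 →
      lazyEnergy s q ≤ μ * (Fintype.card ι * ∑ g, q g ^ 2)) (m : ℕ) :
    sumSqLazyDev s m ≤ (μ * Fintype.card ι) ^ m := by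
  induction m with
  | zero =>
    simpa [sumSqLazyDev, lazyDev] using
      sum_sq_sub_inv_card_le_one (lazyLaw_nonneg (s ∘ _)) (sum_lazyLaw _)
  | succ m ih =>
    calc sumSqLazyDev s (m + 1)
        ≤ ∑ a : Fin m → ι, μ * Fintype.card ι * ∑ g, lazyDev (s ∘ a) g ^ 2 := by
          rw [sumSqLazyDev_succ]
          exact sum_le_sum fun a _ => (hμ _ (sum_lazyDev _)).trans_eq (mul_assoc ..).symm
      _ = μ * Fintype.card ι * sumSqLazyDev s m := by rw [sumSqLazyDev, mul_sum]
      _ ≤ (μ * Fintype.card ι) ^ (m + 1) := by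
          rw [pow_succ']; exact mul_le_mul_of_nonneg_left ih (by positivity)

theorem card_mul_le_sumSqLazyDev (s : ι → G) (m : ℕ) (c : ℝ) :
    (#{a : Fin m → ι | c ≤ ∑ g, lazyDev (s ∘ a) g ^ 2} : ℝ) * c ≤ sumSqLazyDev s m :=
  calc _ ≤ ∑ a ∈ {a : Fin m → ι | c ≤ ∑ g, lazyDev (s ∘ a) g ^ 2},
          ∑ g, lazyDev (s ∘ a) g ^ 2 := by
        simpa using card_nsmul_le_sum _ _ c fun a ha => (mem_filter.1 ha).2
    _ ≤ sumSqLazyDev s m :=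
        sum_le_sum_of_subset_of_nonneg (filter_subset _ _) fun a _ _ =>
          sum_nonneg fun g _ => sq_nonneg _

theorem exists_card_tvDistToUniform_lt [Nonempty ι] {s : ι → G}
    (hs : Subgroup.closure (Set.range s) = ⊤) {ε : ℝ} (hε : 0 < ε) :
    ∃ m : ℕ, (1 - ε) * (Fintype.card (Fin m → ι) : ℝ) <
      Nat.card {a : Fin m → ι // tvDistToUniform (lazyLaw (s ∘ a)) < ε} := by
  obtain ⟨μ, hμ0, hμ1, hμ⟩ := exists_lazyEnergy_le hs
  set c : ℝ := 4 * ε ^ 2 / Fintype.card G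
  have hc : 0 < c := by positivity
  obtain ⟨m, hm⟩ := exists_pow_lt_of_lt_one (mul_pos hε hc) hμ1
  refine ⟨m, ?_⟩
  set N : ℝ := (Fintype.card ι : ℝ)
  have hN : 0 < N := Nat.cast_pos.2 Fintype.card_pos
  have hcard : (Fintype.card (Fin m → ι) : ℝ) = N ^ m := by simp [N]
  have hbad : (#{a : Fin m → ι | c ≤ ∑ g, lazyDev (s ∘ a) g ^ 2} : ℝ) < ε * N ^ m := by
    refine lt_of_mul_lt_mul_right ?_ hc.le
    calc _ ≤ sumSqLazyDev s m := card_mul_le_sumSqLazyDev s m c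
      _ ≤ μ ^ m * N ^ m := by rw [← mul_pow]; exact sumSqLazyDev_le hμ0 hμ m
      _ < ε * c * N ^ m := mul_lt_mul_of_pos_right hm (by positivity)
      _ = ε * N ^ m * c := by ring
  have hgood : #{a : Fin m → ι | ¬ c ≤ ∑ g, lazyDev (s ∘ a) g ^ 2} ≤
      Nat.card {a : Fin m → ι // tvDistToUniform (lazyLaw (s ∘ a)) < ε} := by
    rw [Nat.card_eq_fintype_card, Fintype.card_subtype]
    exact card_le_card (monotone_filter_right _ fun a _ ha =>
      tvDistToUniform_lt_of_sum_sq_lt hε (not_le.1 ha))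
  have hsplit := card_filter_add_card_filter_not (s := (univ : Finset (Fin m → ι)))
    (fun a => c ≤ ∑ g, lazyDev (s ∘ a) g ^ 2)
  rw [card_univ, ← Nat.cast_inj (R := ℝ), Nat.cast_add, hcard] at hsplit
  have := (Nat.cast_le (α := ℝ)).2 hgood
  rw [hcard]
  linarith

end Mixing

theorem closure_range_swap_of_lt_eq_top (k : ℕ) :
    Subgroup.closure
      (Set.range fun p : {p : Fin k × Fin k // p.1 < p.2} => Equiv.swap p.1.1 p.1.2) = ⊤ := by
  refine eq_top_iff.2 (Equiv.Perm.closure_isSwap.ge.trans (Subgroup.closure_mono ?_))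
  rintro σ ⟨a, b, hab, rfl⟩
  rcases hab.lt_or_gt with h | h
  · exact ⟨⟨(a, b), h⟩, rfl⟩
  · exact ⟨⟨(b, a), h⟩, Equiv.swap_comm b a⟩

theorem schedTV_eq_tvDistToUniform {k m : ℕ} (α : Fin m → {p : Fin k × Fin k // p.1 < p.2}) :
    schedTV α = tvDistToUniform (lazyLaw ((fun p => Equiv.swap p.1.1 p.1.2) ∘ α)) := by
  rw [schedTV, tvDistToUniform, Fintype.card_perm, Fintype.card_fin, one_div (k.factorial : ℝ)]
  rfl

/-- For every `k ≥ 2` and `ε > 0` there is `m` such that a uniformly random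
schedule of `m` transposition pairs is `ε`-good (the conditional law of the
product is within `ε` of uniform in total variation) with probability greater
than `1 − ε`. -/
theorem stmt15 (k : ℕ) (hk : 2 ≤ k) (ε : ℝ) (hε : 0 < ε) :
    ∃ m : ℕ,
      (1 - ε) * (Fintype.card (Fin m → {p : Fin k × Fin k // p.1 < p.2}) : ℝ)
        < (Nat.card {α : Fin m → {p : Fin k × Fin k // p.1 < p.2} //
            schedTV α < ε} : ℝ) := by
  have : Nonempty {p : Fin k × Fin k // p.1 < p.2} :=
    ⟨⟨(⟨0, by omega⟩, ⟨1, by omega⟩), Fin.mk_lt_mk.2 zero_lt_one⟩⟩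
  simpa only [schedTV_eq_tvDistToUniform] using
    exists_card_tvDistToUniform_lt (closure_range_swap_of_lt_eq_top k) hε
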